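/- Let (Λ,d) be a generalised Bratteli diagram of depth N ∈ ℕ ∪ {∞}, with vertex decomposition Λ⁰ = ⊔_{n} ⊔_{j=1}^{c_n} V_{n,j}. For 0 ≤ n < N, 1 ≤ j ≤ c_n and 1 ≤ i ≤ c_{n+1}: (1) the sets vΛ^{e₁}V_{n+1,i} for v ∈ V_{n,j} all have the same cardinality, denoted A_n(i,j); (2) the sets V_{n,j}Λ^{e₁}w for w ∈ V_{n+1,i} all have the same cardinality, denoted B_n(i,j); and (3) A_n(i,j)·|V_{n,j}| = |V_{n,j}Λ^{e₁}V_{n+1,i}| = |V_{n+1,i}|·B_n(i,j). The resulting nonnegative integer matrices A_n and B_n (of size c_{n+1} × c_n) have no zero rows and no zero columns, and if T_n denotes the c_n × c_n diagonal matrix with T_n(j,j) = |V_{n,j}|, then A_n T_n = T_{n+1} B_n for all 0 ≤ n < N. -/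
import Mathlib


open scoped ENNReal

/-- A rank-2 graph (`2`-graph): a countable category whose morphisms (paths) carry a
degree functor `d : Path → ℕ × ℕ` satisfying the unique factorisation property.
Vertices are identified with the paths of degree `(0,0)`; composition is a total
function whose behaviour is constrained only on composable pairs (`s p = r q`). -/
structure TwoGraph where
  Path : Type
  countable : Countable Path
  d : Path → ℕ × ℕ
  r : Path → Path
  s : Path → Path
  comp : Path → Path → Path
  d_r : ∀ p, d (r p) = 0
  d_s : ∀ p, d (s p) = 0
  r_vertex : ∀ p, d p = 0 → r p = p
  s_vertex : ∀ p, d p = 0 → s p = p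
  id_comp : ∀ p, comp (r p) p = p
  comp_id : ∀ p, comp p (s p) = p
  r_comp : ∀ p q, s p = r q → r (comp p q) = r p
  s_comp : ∀ p q, s p = r q → s (comp p q) = s q
  d_comp : ∀ p q, s p = r q → d (comp p q) = d p + d q
  comp_assoc : ∀ p q t, s p = r q → s q = r t → comp (comp p q) t = comp p (comp q t)
  factor : ∀ (lam : Path) (m n : ℕ × ℕ), d lam = m + n →
    ∃! mn : Path × Path,
      d mn.1 = m ∧ d mn.2 = n ∧ s mn.1 = r mn.2 ∧ comp mn.1 mn.2 = lam

namespace TwoGraph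

variable (G : TwoGraph)

/-- Vertices are the paths of degree `0`. -/
def IsVertex (p : G.Path) : Prop := G.d p = 0

/-- A blue path: one whose degree lies in `ℕ e₁`. -/
def IsBlue (p : G.Path) : Prop := (G.d p).2 = 0

/-- A red path: one whose degree lies in `ℕ e₂`. -/
def IsRed (p : G.Path) : Prop := (G.d p).1 = 0

/-- A blue edge: a path of degree `e₁ = (1,0)`. -/
def IsBlueEdge (p : G.Path) : Prop := G.d p = (1, 0)

/-- A red edge: a path of degree `e₂ = (0,1)`. -/
def IsRedEdge (p : G.Path) : Prop := G.d p = (0, 1)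

/-- `Λ` is row-finite: `vΛⁿ` is finite for every vertex `v` and degree `n`. -/
def RowFinite : Prop :=
  ∀ (v : G.Path) (n : ℕ × ℕ), G.IsVertex v →
    {p : G.Path | G.r p = v ∧ G.d p = n}.Finite

/-- `Λ` is a finite `2`-graph: `Λⁿ` is finite for every degree `n`. -/
def FinitePaths : Prop := ∀ n : ℕ × ℕ, {p : G.Path | G.d p = n}.Finite

/-- `μ` is an initial segment of `lam`, i.e. `lam = μ ν` for some `ν`. -/
def InitSeg (μ lam : G.Path) : Prop := ∃ ν, G.s μ = G.r ν ∧ G.comp μ ν = lam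

/-- `μ` is a final segment of `lam`, i.e. `lam = ν μ` for some `ν`. -/
def FinalSeg (μ lam : G.Path) : Prop := ∃ ν, G.s ν = G.r μ ∧ G.comp ν μ = lam

/-- The vertex `v` lies on the path `lam`, i.e. `v = lam(n)` for some `0 ≤ n ≤ d lam`. -/
def OnPath (lam v : G.Path) : Prop :=
  G.IsVertex v ∧ ∃ μ, G.InitSeg μ lam ∧ G.s μ = v

/-- A cycle: `d lam ≠ 0`, `r lam = s lam`, and `lam(n) ≠ s lam` for `0 < n < d lam`. -/
def IsCycle (lam : G.Path) : Prop :=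
  G.d lam ≠ 0 ∧ G.r lam = G.s lam ∧
    ∀ μ, G.InitSeg μ lam → G.d μ ≠ 0 → G.d μ ≠ G.d lam → G.s μ ≠ G.s lam

/-- `lam` has no entrance: for `n ≤ d lam`, every path of degree `n` with range `r lam`
is the initial segment `lam(0,n)`. -/
def HasNoEntrance (lam : G.Path) : Prop :=
  ∀ n : ℕ × ℕ, n ≤ G.d lam → ∀ μ, G.d μ = n → G.r μ = G.r lam → G.InitSeg μ lam

/-- `lam` has no exit: for `n ≤ d lam`, every path of degree `n` with source `s lam`
is the final segment `lam(d lam - n, d lam)`. -/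
def HasNoExit (lam : G.Path) : Prop :=
  ∀ n : ℕ × ℕ, n ≤ G.d lam → ∀ μ, G.d μ = n → G.s μ = G.s lam → G.FinalSeg μ lam

/-- An isolated cycle: no entrances and no exits. -/
def IsIsolated (lam : G.Path) : Prop := G.HasNoEntrance lam ∧ G.HasNoExit lam

/-- An isolated cycle in the red graph. -/
def IsIsolatedRedCycle (lam : G.Path) : Prop :=
  G.IsRed lam ∧ G.IsCycle lam ∧ G.IsIsolated lam

/-- Condition (3.1): `Λ` is row-finite, the blue graph contains no cycles, and each
vertex is the range of an isolated cycle in the red graph. -/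
def Cond31 : Prop :=
  G.RowFinite ∧ (∀ p, G.IsBlue p → ¬ G.IsCycle p) ∧
    ∀ v, G.IsVertex v → ∃ lam, G.IsIsolatedRedCycle lam ∧ G.r lam = v

/-- A source of the blue graph: a vertex receiving no blue edges. -/
def IsBlueSource (v : G.Path) : Prop :=
  G.IsVertex v ∧ ∀ e, G.IsBlueEdge e → G.r e ≠ v

/-- A sink of the blue graph: a vertex emitting no blue edges. -/
def IsBlueSink (v : G.Path) : Prop :=
  G.IsVertex v ∧ ∀ e, G.IsBlueEdge e → G.s e ≠ v

/-- `Λ^{≤ n}`. -/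
def LeSet (n : ℕ × ℕ) : Set G.Path :=
  {lam | G.d lam ≤ n ∧
    ∀ μ, G.s lam = G.r μ → G.comp lam μ ≠ lam → ¬ G.d (G.comp lam μ) ≤ n}

/-- `IsSwap ρ τ τ' ρ'` says that `(τ', ρ') = 𝓕(ρ, τ)` is the factorisation of `ρτ`
with the degrees in the reversed order: `τ'ρ' = ρτ`, `d τ' = d τ` and `d ρ' = d ρ`. -/
def IsSwap (ρ τ τ' ρ' : G.Path) : Prop :=
  G.s ρ = G.r τ ∧ G.s τ' = G.r ρ' ∧ G.d τ' = G.d τ ∧ G.d ρ' = G.d ρ ∧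
    G.comp τ' ρ' = G.comp ρ τ

/-- The edge `e` occurs at position `n` in the red path `μ`. -/
def OccAt (μ e : G.Path) (n : ℕ) : Prop :=
  ∃ ρ ξ, G.d ρ = (0, n) ∧ G.s ρ = G.r e ∧ G.s e = G.r ξ ∧
    G.comp ρ (G.comp e ξ) = μ

/-- `⟨μ, e⟩`: the number of occurrences of the red edge `e` in the red path `μ`. -/
noncomputable def occCount (μ e : G.Path) : ℕ :=
  Nat.card {n : ℕ // G.OccAt μ e n}

/-- Membership in `Y = (blue Λ)S`: a blue path whose source is a source of the
blue graph. -/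
def InY (α : G.Path) : Prop := G.IsBlue α ∧ G.IsBlueSource (G.s α)

/-- One step of the factorisation permutation `𝓕` of the blue paths of a GBD:
`α' = 𝓕(α)` iff `f α = α' f'` for (the) red edges `f, f'` with `s f = r α`. -/
def FStep (α α' : G.Path) : Prop :=
  G.IsBlue α ∧ G.IsBlue α' ∧
    ∃ f f', G.IsRedEdge f ∧ G.IsRedEdge f' ∧ G.s f = G.r α ∧ G.s α' = G.r f' ∧
      G.comp f α = G.comp α' f'

end TwoGraph

/-- `k`-fold iteration of the factorisation permutation, as a relation. -/
def TwoGraph.FIter (G : TwoGraph) : ℕ → G.Path → G.Path → Prop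
  | 0, α, α' => α = α'
  | k + 1, α, α' => ∃ β, G.FStep α β ∧ TwoGraph.FIter G k β α'

namespace TwoGraph

variable (G : TwoGraph)

/-- `o(α) = k`: `k` is the order of the blue path `α` under the factorisation
permutation `𝓕`. -/
def HasOrder (α : G.Path) (k : ℕ) : Prop :=
  0 < k ∧ G.FIter k α α ∧ ∀ m, 0 < m → m < k → ¬ G.FIter m α α

end TwoGraph

/-- `IsChainComp [e₁, …, eₙ] β` says `β = e₁ e₂ ⋯ eₙ`. -/
def TwoGraph.IsChainComp (G : TwoGraph) : List G.Path → G.Path → Prop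
  | [], β => G.IsVertex β
  | e :: l, β => ∃ γ, TwoGraph.IsChainComp G l γ ∧ G.s e = G.r γ ∧ β = G.comp e γ

/-- `cyclePow lam m = lam^m`, the `m`-fold concatenation of the cycle `lam`,
with `lam^0 = s lam`. -/
def TwoGraph.cyclePow (G : TwoGraph) (lam : G.Path) : ℕ → G.Path
  | 0 => G.s lam
  | m + 1 => G.comp lam (TwoGraph.cyclePow G lam m)

namespace TwoGraph

variable (G : TwoGraph)

/-! ### Relative (sub-2-graph) versions of the basic notions -/

/-- `μ` is an initial segment of `lam` within `P`. -/
def InitSegIn (P : Set G.Path) (μ lam : G.Path) : Prop :=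
  ∃ ν ∈ P, G.s μ = G.r ν ∧ G.comp μ ν = lam

/-- `μ` is a final segment of `lam` within `P`. -/
def FinalSegIn (P : Set G.Path) (μ lam : G.Path) : Prop :=
  ∃ ν ∈ P, G.s ν = G.r μ ∧ G.comp ν μ = lam

/-- A cycle of the sub-2-graph with path-set `P`. -/
def IsCycleIn (P : Set G.Path) (lam : G.Path) : Prop :=
  lam ∈ P ∧ G.d lam ≠ 0 ∧ G.r lam = G.s lam ∧
    ∀ μ ∈ P, G.InitSegIn P μ lam → G.d μ ≠ 0 → G.d μ ≠ G.d lam → G.s μ ≠ G.s lam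

def HasNoEntranceIn (P : Set G.Path) (lam : G.Path) : Prop :=
  ∀ n : ℕ × ℕ, n ≤ G.d lam → ∀ μ ∈ P, G.d μ = n → G.r μ = G.r lam → G.InitSegIn P μ lam

def HasNoExitIn (P : Set G.Path) (lam : G.Path) : Prop :=
  ∀ n : ℕ × ℕ, n ≤ G.d lam → ∀ μ ∈ P, G.d μ = n → G.s μ = G.s lam → G.FinalSegIn P μ lam

/-- An isolated cycle of the red graph of the sub-2-graph with path-set `P`. -/
def IsIsolatedRedCycleIn (P : Set G.Path) (lam : G.Path) : Prop :=
  lam ∈ P ∧ G.IsRed lam ∧ G.IsCycleIn P lam ∧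
    G.HasNoEntranceIn P lam ∧ G.HasNoExitIn P lam

def RowFiniteIn (P : Set G.Path) : Prop :=
  ∀ (v : G.Path) (n : ℕ × ℕ), G.IsVertex v →
    {p : G.Path | p ∈ P ∧ G.r p = v ∧ G.d p = n}.Finite

/-- A source of the blue graph of the sub-2-graph with path-set `P`. -/
def IsBlueSourceIn (P : Set G.Path) (v : G.Path) : Prop :=
  v ∈ P ∧ G.IsVertex v ∧ ∀ e ∈ P, G.IsBlueEdge e → G.r e ≠ v

/-- Condition (3.1) for the sub-2-graph with path-set `P`. -/
def Cond31In (P : Set G.Path) : Prop :=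
  G.RowFiniteIn P ∧ (∀ p ∈ P, G.IsBlue p → ¬ G.IsCycleIn P p) ∧
    ∀ v ∈ P, G.IsVertex v → ∃ lam, G.IsIsolatedRedCycleIn P lam ∧ G.r lam = v

/-- `Λ_j = {λ ∈ Λ : s(λ) Λ W ≠ ∅}`: the paths admitting a path from their source
into the vertex set `W`. -/
def subGraphTo (W : Set G.Path) : Set G.Path :=
  {p | ∃ μ, G.r μ = G.s p ∧ G.s μ ∈ W}

/-- `Λ` has large-permutation factorisations. -/
def HasLPF : Prop :=
  ∀ v, G.IsVertex v → ∀ l : ℕ, 0 < l → ∃ N : ℕ,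
    ∀ α, G.IsBlue α → G.r α = v → G.d α = (N, 0) →
      ∀ k, G.HasOrder α k → l < k

end TwoGraph

/-- A generalised Bratteli diagram of depth `N ∈ ℕ ∪ {∞}` with vertex decomposition
`Λ⁰ = ⊔ₙ V n`. -/
structure IsGBD (G : TwoGraph) (N : ℕ∞) (V : ℕ → Set G.Path) : Prop where
  rowFinite : G.RowFinite
  level_nonempty : ∀ n : ℕ, (n : ℕ∞) ≤ N → (V n).Nonempty
  level_finite : ∀ n : ℕ, (V n).Finite
  level_empty : ∀ n : ℕ, ¬ ((n : ℕ∞) ≤ N) → V n = ∅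
  level_vertex : ∀ n, V n ⊆ {v | G.IsVertex v}
  cover : ∀ v, G.IsVertex v → ∃ n, v ∈ V n
  level_disjoint : ∀ m n, m ≠ n → Disjoint (V m) (V n)
  blue_level : ∀ e, G.IsBlueEdge e → ∃ n, G.r e ∈ V n ∧ G.s e ∈ V (n + 1)
  sinks_bottom : ∀ v, G.IsBlueSink v → v ∈ V 0
  sources_top : ∀ v, G.IsBlueSource v → ∃ n : ℕ, (n : ℕ∞) = N ∧ v ∈ V n
  red_cycle : ∀ v, G.IsVertex v → ∃ lam, G.IsIsolatedRedCycle lam ∧ G.r lam = v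
  red_level : ∀ f, G.IsRedEdge f → ∃ n, G.r f ∈ V n ∧ G.s f ∈ V n

/-- The sub-2-graph `Λ_N` of paths joining vertices in the first `N` levels. -/
def levelPaths (G : TwoGraph) (V : ℕ → Set G.Path) (N : ℕ) : Set G.Path :=
  {p | (∃ n ≤ N, G.r p ∈ V n) ∧ (∃ n ≤ N, G.s p ∈ V n)}

/-- An infinite path in a 2-graph: a degree-preserving functor `Ω₂ → Λ`, recorded by
its segments `x(m,n)` for `m ≤ n` in `ℕ × ℕ`. -/
structure InfPath (G : TwoGraph) where
  seg : ℕ × ℕ → ℕ × ℕ → G.Path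
  deg : ∀ m n : ℕ × ℕ, m ≤ n → G.d (seg m n) = n - m
  range_seg : ∀ m n : ℕ × ℕ, m ≤ n → G.r (seg m n) = seg m m
  source_seg : ∀ m n : ℕ × ℕ, m ≤ n → G.s (seg m n) = seg n n
  comp_seg : ∀ m n p : ℕ × ℕ, m ≤ n → n ≤ p → G.comp (seg m n) (seg n p) = seg m p

/-- A Cuntz–Krieger `Λ`-family in a C*-algebra `A`. -/
structure CKFamily (G : TwoGraph) (A : Type*) [CStarAlgebra A] where
  S : G.Path → A
  ck1_sa : ∀ v, G.IsVertex v → star (S v) = S v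
  ck1_idem : ∀ v, G.IsVertex v → S v * S v = S v
  ck1_orth : ∀ v w, G.IsVertex v → G.IsVertex w → v ≠ w → S v * S w = 0
  ck2 : ∀ p q, G.s p = G.r q → S p * S q = S (G.comp p q)
  ck3 : ∀ p, star (S p) * S p = S (G.s p)
  ck4 : ∀ (v : G.Path) (n : ℕ × ℕ), G.IsVertex v →
    S v = ∑ᶠ lam ∈ {lam : G.Path | lam ∈ G.LeSet n ∧ G.r lam = v},
      S lam * star (S lam)

section CStar

variable {A : Type*} [CStarAlgebra A]

/-- The C*-subalgebra (as a subset) of `A` generated by a set `SS`. -/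
def generatedCStar (SS : Set A) : Set A :=
  closure (NonUnitalStarAlgebra.adjoin ℂ SS : Set A)

/-- `P` is full in the C*-algebra `Bset ⊆ A`: every closed two-sided ideal of `Bset`
containing `P` is all of `Bset`. -/
def FullIn (Bset : Set A) (P : A) : Prop :=
  ∀ I : Set A, I ⊆ Bset → IsClosed I →
    (∀ x ∈ I, ∀ y ∈ I, x + y ∈ I) → (∀ (c : ℂ), ∀ x ∈ I, c • x ∈ I) →
    (∀ a ∈ Bset, ∀ x ∈ I, a * x ∈ I ∧ x * a ∈ I) →
    P ∈ I → Bset ⊆ I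

/-- The sum `∑_{v ∈ Λ⁰} s_v`, which is the unit of `C*(Λ)` for finite `Λ`. -/
noncomputable def ckUnit (G : TwoGraph) (F : CKFamily G A) : A :=
  ∑ᶠ v ∈ {v : G.Path | G.IsVertex v}, F.S v

/-- The canonical unitary `U = ∑_{α ∈ Y} s_α s_{λ(α)} s_α*`. -/
noncomputable def ckU (G : TwoGraph) (F : CKFamily G A) (lam : G.Path → G.Path) : A :=
  ∑ᶠ α ∈ {α : G.Path | G.InY α}, F.S α * F.S (lam α) * star (F.S α)

/-- The gauge action: for every `z ∈ 𝕋²` there is a *-automorphism `γ_z` of the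
C*-subalgebra generated by the family with `γ_z(s_λ) = z^{d(λ)} s_λ`. -/
def GaugeInvariant (G : TwoGraph) (F : CKFamily G A) : Prop :=
  ∀ z₁ z₂ : ℂ, ‖z₁‖ = 1 → ‖z₂‖ = 1 → ∃ γ : A → A,
    Set.BijOn γ (generatedCStar (Set.range F.S)) (generatedCStar (Set.range F.S)) ∧
    (∀ x ∈ generatedCStar (Set.range F.S), ∀ y ∈ generatedCStar (Set.range F.S),
      γ (x + y) = γ x + γ y ∧ γ (x * y) = γ x * γ y) ∧
    (∀ x ∈ generatedCStar (Set.range F.S), γ (star x) = star (γ x)) ∧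
    (∀ (c : ℂ), ∀ x ∈ generatedCStar (Set.range F.S), γ (c • x) = c • γ x) ∧
    (∀ p : G.Path, γ (F.S p) = (z₁ ^ (G.d p).1 * z₂ ^ (G.d p).2) • F.S p)

end CStar

section Helpers

namespace TwoGraph

variable {G : TwoGraph}

lemma isVertex_r' (p : G.Path) : G.IsVertex (G.r p) := G.d_r p
lemma isVertex_s' (p : G.Path) : G.IsVertex (G.s p) := G.d_s p
lemma s_r' (p : G.Path) : G.s (G.r p) = G.r p := G.s_vertex _ (G.d_r p)
lemma r_s' (p : G.Path) : G.r (G.s p) = G.s p := G.r_vertex _ (G.d_s p)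

/-- The degree of an isolated red cycle. -/
lemma redCycle_deg {lam : G.Path} (hlam : G.IsIsolatedRedCycle lam) :
    (G.d lam).1 = 0 ∧ (G.d lam).2 ≠ 0 := by
  refine ⟨hlam.1, fun h => hlam.2.1.1 ?_⟩
  have : G.d lam = ((G.d lam).1, (G.d lam).2) := rfl
  rw [this, hlam.1, h]; rfl

/-- Existence and uniqueness of the red edge out of a vertex. -/
lemma exists_red_out (hrc : ∀ v, G.IsVertex v → ∃ lam, G.IsIsolatedRedCycle lam ∧ G.r lam = v)
    (v : G.Path) (hv : G.IsVertex v) :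
    ∃ f, (G.IsRedEdge f ∧ G.s f = v) ∧ ∀ g, G.IsRedEdge g → G.s g = v → g = f := by
  obtain ⟨lam, hlam, hr⟩ := hrc v hv
  obtain ⟨h1, h2⟩ := redCycle_deg hlam
  have hd : G.d lam = (0, (G.d lam).2 - 1) + (0, 1) := by
    have : G.d lam = ((G.d lam).1, (G.d lam).2) := rfl
    rw [this, h1, Prod.mk_add_mk]
    exact Prod.ext rfl (by omega)
  obtain ⟨⟨ν, f⟩, ⟨hdν, hdf, hsν, hcomp⟩, huniq⟩ := G.factor lam _ _ hd
  have hsf : G.s f = v := by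
    have := G.s_comp ν f hsν
    rw [hcomp] at this
    rw [← this, ← hlam.2.1.2.1, hr]
  refine ⟨f, ⟨hdf, hsf⟩, fun g hg hgs => ?_⟩
  have hle : ((0 : ℕ), (1 : ℕ)) ≤ G.d lam := by
    constructor
    · simp [h1]
    · omega
  obtain ⟨ρ, hsρ, hcρ⟩ := hlam.2.2.2 (0, 1) hle g hg
    (by rw [hgs, ← hr, hlam.2.1.2.1])
  have hdρ : G.d ρ = (0, (G.d lam).2 - 1) := by
    have hdc := G.d_comp ρ g hsρ
    rw [hcρ, hg] at hdc
    have h1' := congrArg Prod.fst hdc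
    have h2' := congrArg Prod.snd hdc
    simp only [Prod.fst_add, Prod.snd_add] at h1' h2'
    exact Prod.ext (by omega) (by omega)
  have := huniq (ρ, g) ⟨hdρ, hg, hsρ, hcρ⟩
  exact congrArg Prod.snd this

/-- Existence and uniqueness of the red edge into a vertex. -/
lemma exists_red_in (hrc : ∀ v, G.IsVertex v → ∃ lam, G.IsIsolatedRedCycle lam ∧ G.r lam = v)
    (v : G.Path) (hv : G.IsVertex v) :
    ∃ f, (G.IsRedEdge f ∧ G.r f = v) ∧ ∀ g, G.IsRedEdge g → G.r g = v → g = f := by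
  obtain ⟨lam, hlam, hr⟩ := hrc v hv
  obtain ⟨h1, h2⟩ := redCycle_deg hlam
  have hd : G.d lam = (0, 1) + (0, (G.d lam).2 - 1) := by
    have : G.d lam = ((G.d lam).1, (G.d lam).2) := rfl
    rw [this, h1, Prod.mk_add_mk]
    exact Prod.ext rfl (by omega)
  obtain ⟨⟨f, ν⟩, ⟨hdf, hdν, hsf, hcomp⟩, huniq⟩ := G.factor lam _ _ hd
  have hrf : G.r f = v := by
    have := G.r_comp f ν hsf
    rw [hcomp] at this
    rw [← this, hr]
  refine ⟨f, ⟨hdf, hrf⟩, fun g hg hgr => ?_⟩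
  have hle : ((0 : ℕ), (1 : ℕ)) ≤ G.d lam := by
    constructor
    · simp [h1]
    · omega
  obtain ⟨ξ, hsξ, hcξ⟩ := hlam.2.2.1 (0, 1) hle g hg (by rw [hgr, hr])
  have hdξ : G.d ξ = (0, (G.d lam).2 - 1) := by
    have hdc := G.d_comp g ξ hsξ
    rw [hcξ, hg] at hdc
    have h1' := congrArg Prod.fst hdc
    have h2' := congrArg Prod.snd hdc
    simp only [Prod.fst_add, Prod.snd_add] at h1' h2'
    exact Prod.ext (by omega) (by omega)
  have := huniq (g, ξ) ⟨hg, hdξ, hsξ, hcξ⟩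
  exact congrArg Prod.fst this

end TwoGraph

end Helpers

namespace TwoGraph

variable {G : TwoGraph}

lemma onPath_r' (lam : G.Path) : G.OnPath lam (G.r lam) :=
  ⟨G.d_r lam, G.r lam, ⟨lam, by rw [s_r'], G.id_comp lam⟩, s_r' lam⟩

/-- Any vertex on a red cycle is the source of a positive initial segment. -/
lemma onPath_pos_init {lam v : G.Path} (hlam : G.IsIsolatedRedCycle lam)
    (hv : G.OnPath lam v) :
    ∃ μ ν, G.s μ = G.r ν ∧ G.comp μ ν = lam ∧ G.s μ = v ∧
      (G.d μ).1 = 0 ∧ (G.d μ).2 ≠ 0 := by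
  obtain ⟨hv0, μ, ⟨ν, hsμ, hcμ⟩, hsv⟩ := hv
  obtain ⟨h1, h2⟩ := redCycle_deg hlam
  have hdd : G.d μ + G.d ν = G.d lam := by rw [← hcμ, G.d_comp μ ν hsμ]
  have hμ1 : (G.d μ).1 = 0 := by
    have := congrArg Prod.fst hdd
    simp only [Prod.fst_add] at this; omega
  by_cases hμ2 : (G.d μ).2 = 0
  · -- then v = r lam = s lam; use μ := lam
    have hμ0 : G.d μ = 0 := Prod.ext hμ1 hμ2
    have hμeq : μ = G.s μ := (G.s_vertex μ hμ0).symm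
    have hμr : μ = G.r ν := hμeq.trans hsμ
    have hlamν : lam = ν := by rw [← hcμ, hμr, G.id_comp]
    have hrlam : G.r lam = v := by rw [hlamν, ← hμr, hμeq, hsv]
    refine ⟨lam, G.s lam, by rw [r_s'], G.comp_id lam, ?_, h1, h2⟩
    rw [← hlam.2.1.2.1, hrlam]
  · exact ⟨μ, ν, hsμ, hcμ, hsv, hμ1, hμ2⟩

/-- Any vertex on a red cycle is the range of a positive final piece. -/
lemma onPath_pos_tail {lam v : G.Path} (hlam : G.IsIsolatedRedCycle lam)
    (hv : G.OnPath lam v) :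
    ∃ μ ν, G.s μ = G.r ν ∧ G.comp μ ν = lam ∧ G.s μ = v ∧
      (G.d ν).1 = 0 ∧ (G.d ν).2 ≠ 0 := by
  obtain ⟨hv0, μ, ⟨ν, hsμ, hcμ⟩, hsv⟩ := hv
  obtain ⟨h1, h2⟩ := redCycle_deg hlam
  have hdd : G.d μ + G.d ν = G.d lam := by rw [← hcμ, G.d_comp μ ν hsμ]
  have hν1 : (G.d ν).1 = 0 := by
    have := congrArg Prod.fst hdd
    simp only [Prod.fst_add] at this; omega
  by_cases hν2 : (G.d ν).2 = 0
  · have hν0 : G.d ν = 0 := Prod.ext hν1 hν2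
    have hνeq : ν = G.r ν := (G.r_vertex ν hν0).symm
    have hνs : ν = G.s μ := hνeq.trans hsμ.symm
    have hlamμ : lam = μ := by rw [← hcμ, hνs, G.comp_id]
    have hvs : v = G.s lam := by rw [hlamμ, hsv]
    refine ⟨G.r lam, lam, by rw [s_r'], G.id_comp lam, ?_, h1, h2⟩
    rw [s_r', hlam.2.1.2.1, ← hvs]
  · exact ⟨μ, ν, hsμ, hcμ, hsv, hν1, hν2⟩

/-- The red edge out of a vertex on an isolated red cycle stays on the cycle. -/
lemma onPath_red_out {lam v : G.Path} (hlam : G.IsIsolatedRedCycle lam)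
    (hv : G.OnPath lam v) :
    ∃ f, G.IsRedEdge f ∧ G.s f = v ∧ G.OnPath lam (G.r f) := by
  obtain ⟨μ, ν, hsμ, hcμ, hsv, hμ1, hμ2⟩ := onPath_pos_init hlam hv
  have hd : G.d μ = (0, (G.d μ).2 - 1) + (0, 1) := by
    have : G.d μ = ((G.d μ).1, (G.d μ).2) := rfl
    rw [this, hμ1, Prod.mk_add_mk]
    exact Prod.ext rfl (by omega)
  obtain ⟨⟨ρ, f⟩, ⟨hdρ, hdf, hsρ, hcρ⟩, -⟩ := G.factor μ _ _ hd
  have hsf : G.s f = v := by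
    have := G.s_comp ρ f hsρ
    rw [hcρ] at this
    rw [← this, hsv]
  have hsfν : G.s f = G.r ν := by rw [hsf, ← hsv, hsμ]
  refine ⟨f, hdf, hsf, isVertex_r' f, ρ, ⟨G.comp f ν, ?_, ?_⟩, hsρ⟩
  · rw [G.r_comp f ν hsfν, ← hsρ]
  · rw [← G.comp_assoc ρ f ν hsρ hsfν, hcρ, hcμ]

/-- The red edge into a vertex on an isolated red cycle comes from the cycle. -/
lemma onPath_red_in {lam v : G.Path} (hlam : G.IsIsolatedRedCycle lam)
    (hv : G.OnPath lam v) :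
    ∃ f, G.IsRedEdge f ∧ G.r f = v ∧ G.OnPath lam (G.s f) := by
  obtain ⟨μ, ν, hsμ, hcμ, hsv, hν1, hν2⟩ := onPath_pos_tail hlam hv
  have hd : G.d ν = (0, 1) + (0, (G.d ν).2 - 1) := by
    have : G.d ν = ((G.d ν).1, (G.d ν).2) := rfl
    rw [this, hν1, Prod.mk_add_mk]
    exact Prod.ext rfl (by omega)
  obtain ⟨⟨f, ρ⟩, ⟨hdf, hdρ, hsf, hcf⟩, -⟩ := G.factor ν _ _ hd
  have hrf : G.r f = v := by
    have := G.r_comp f ρ hsf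
    rw [hcf] at this
    rw [← this, ← hsμ, hsv]
  have hsμf : G.s μ = G.r f := by rw [hrf]; exact hsv
  have hsc : G.s (G.comp μ f) = G.s f := G.s_comp μ f hsμf
  refine ⟨f, hdf, hrf, isVertex_s' f, G.comp μ f, ⟨ρ, ?_, ?_⟩, hsc⟩
  · rw [hsc, hsf]
  · rw [G.comp_assoc μ f ρ hsμf hsf, hcf, hcμ]

/-- Red edges preserve membership on isolated red cycles. -/
lemma red_closed (hrc : ∀ v, G.IsVertex v → ∃ lam, G.IsIsolatedRedCycle lam ∧ G.r lam = v)
    {lam : G.Path} (hlam : G.IsIsolatedRedCycle lam) {g : G.Path} (hg : G.IsRedEdge g) :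
    G.OnPath lam (G.s g) ↔ G.OnPath lam (G.r g) := by
  constructor
  · intro h
    obtain ⟨f, hf, hsf, hof⟩ := onPath_red_out hlam h
    obtain ⟨f₀, hf₀, hu⟩ := exists_red_out hrc (G.s g) (isVertex_s' g)
    rw [hu g hg rfl, ← hu f hf hsf]
    exact hof
  · intro h
    obtain ⟨f, hf, hrf, hof⟩ := onPath_red_in hlam h
    obtain ⟨f₀, hf₀, hu⟩ := exists_red_in hrc (G.r g) (isVertex_r' g)
    rw [hu g hg rfl, ← hu f hf hrf]
    exact hof

end TwoGraph

namespace TwoGraph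

variable {G : TwoGraph}

/-- Counting blue edges out of a vertex is invariant along red edges. -/
lemma ncard_blue_out_eq (hrc : ∀ v, G.IsVertex v → ∃ lam, G.IsIsolatedRedCycle lam ∧ G.r lam = v)
    (T : Set G.Path) (hT : ∀ g, G.IsRedEdge g → (G.s g ∈ T ↔ G.r g ∈ T))
    (f : G.Path) (hf : G.IsRedEdge f) :
    {e : G.Path | G.IsBlueEdge e ∧ G.r e = G.s f ∧ G.s e ∈ T}.ncard
      = {e : G.Path | G.IsBlueEdge e ∧ G.r e = G.r f ∧ G.s e ∈ T}.ncard := by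
  classical
  set E1 : Set G.Path := {e | G.IsBlueEdge e ∧ G.r e = G.s f ∧ G.s e ∈ T} with hE1
  set E2 : Set G.Path := {e | G.IsBlueEdge e ∧ G.r e = G.r f ∧ G.s e ∈ T} with hE2
  -- the "good image" property
  set Good : G.Path → G.Path → Prop := fun e e' =>
    ∃ f', G.IsRedEdge f' ∧ G.s e' = G.r f' ∧ G.d e' = (1, 0) ∧
      G.comp e' f' = G.comp f e with hGood
  have hdeg : ∀ e ∈ E1, G.d (G.comp f e) = ((1 : ℕ), (0 : ℕ)) + ((0 : ℕ), (1 : ℕ)) := by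
    intro e he
    rw [G.d_comp f e he.2.1.symm, hf, he.1]; decide
  have hex : ∀ e : G.Path, ∃ e', e ∈ E1 → Good e e' := by
    intro e
    by_cases he : e ∈ E1
    · obtain ⟨⟨e', f'⟩, ⟨hde', hdf', hse', hc⟩, -⟩ :=
        G.factor (G.comp f e) (1, 0) (0, 1) (hdeg e he)
      exact ⟨e', fun _ => ⟨f', hdf', hse', hde', hc⟩⟩
    · exact ⟨e, fun h => absurd h he⟩
  set Φ : G.Path → G.Path := fun e => (hex e).choose with hΦdef
  have hΦ : ∀ e ∈ E1, Good e (Φ e) := fun e he => (hex e).choose_spec he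
  have hΦu : ∀ e ∈ E1, ∀ e'', Good e e'' → e'' = Φ e := by
    intro e he e'' ⟨f'', hf'', hse'', hde'', hc''⟩
    obtain ⟨f', hf', hse', hde', hc'⟩ := hΦ e he
    have := (G.factor (G.comp f e) (1, 0) (0, 1) (hdeg e he)).unique
      (y₁ := (e'', f'')) (y₂ := (Φ e, f'))
      ⟨hde'', hf'', hse'', hc''⟩ ⟨hde', hf', hse', hc'⟩
    exact congrArg Prod.fst this
  have hmaps : ∀ e ∈ E1, Φ e ∈ E2 := by
    intro e he
    obtain ⟨f', hf', hse', hde', hc'⟩ := hΦ e he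
    refine ⟨hde', ?_, ?_⟩
    · have h1 : G.r (G.comp (Φ e) f') = G.r (Φ e) := G.r_comp _ _ hse'
      have h2 : G.r (G.comp f e) = G.r f := G.r_comp f e he.2.1.symm
      rw [hc'] at h1; rw [← h1, h2]
    · have h1 : G.s (G.comp (Φ e) f') = G.s f' := G.s_comp _ _ hse'
      have h2 : G.s (G.comp f e) = G.s e := G.s_comp f e he.2.1.symm
      rw [hc', h2] at h1
      rw [hse']
      exact (hT f' hf').mp (h1 ▸ he.2.2)
  have hinj : Set.InjOn Φ E1 := by
    intro e₁ he₁ e₂ he₂ heq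
    obtain ⟨f₁', hf₁', hse₁', hde₁', hc₁'⟩ := hΦ e₁ he₁
    obtain ⟨f₂', hf₂', hse₂', hde₂', hc₂'⟩ := hΦ e₂ he₂
    obtain ⟨f₀, -, hu⟩ := exists_red_in hrc (G.s (Φ e₁)) (isVertex_s' _)
    have hff : f₁' = f₂' := by
      rw [hu f₁' hf₁' hse₁'.symm, hu f₂' hf₂' (by rw [heq]; exact hse₂'.symm)]
    have hcc : G.comp f e₁ = G.comp f e₂ := by
      rw [← hc₁', ← hc₂', hff, heq]
    have hdeg2 : G.d (G.comp f e₁) = ((0 : ℕ), (1 : ℕ)) + ((1 : ℕ), (0 : ℕ)) := by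
      rw [G.d_comp f e₁ he₁.2.1.symm, hf, he₁.1]
    have := (G.factor (G.comp f e₁) (0, 1) (1, 0) hdeg2).unique
      (y₁ := (f, e₁)) (y₂ := (f, e₂))
      ⟨hf, he₁.1, he₁.2.1.symm, rfl⟩ ⟨hf, he₂.1, he₂.2.1.symm, hcc.symm⟩
    exact congrArg Prod.snd this
  have himg : E2 = Φ '' E1 := by
    apply Set.Subset.antisymm
    · intro e' he'
      obtain ⟨f', ⟨hf', hrf'⟩, -⟩ := exists_red_in hrc (G.s e') (isVertex_s' _)
      have hdeg2 : G.d (G.comp e' f') = ((0 : ℕ), (1 : ℕ)) + ((1 : ℕ), (0 : ℕ)) := by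
        rw [G.d_comp e' f' hrf'.symm, he'.1, hf']; decide
      obtain ⟨⟨f₀, e⟩, ⟨hdf₀, hde, hsf₀, hc⟩, -⟩ :=
        G.factor (G.comp e' f') (0, 1) (1, 0) hdeg2
      have hrf₀ : G.r f₀ = G.r f := by
        have h1 : G.r (G.comp f₀ e) = G.r f₀ := G.r_comp _ _ hsf₀
        have h2 : G.r (G.comp e' f') = G.r e' := G.r_comp _ _ hrf'.symm
        rw [hc, h2] at h1
        rw [← h1]; exact he'.2.1
      obtain ⟨fc, -, hu⟩ := exists_red_in hrc (G.r f) (isVertex_r' f)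
      have hf₀f : f₀ = f := by rw [hu f₀ hdf₀ hrf₀, hu f hf rfl]
      have hse : G.s e = G.s f' := by
        have h1 : G.s (G.comp f₀ e) = G.s e := G.s_comp _ _ hsf₀
        have h2 : G.s (G.comp e' f') = G.s f' := G.s_comp _ _ hrf'.symm
        rw [hc, h2] at h1; exact h1.symm
      have heE1 : e ∈ E1 := by
        refine ⟨hde, ?_, ?_⟩
        · rw [← hsf₀, hf₀f]
        · rw [hse]
          exact (hT f' hf').mpr (hrf' ▸ he'.2.2)
      refine ⟨e, heE1, ?_⟩
      have : Good e e' := ⟨f', hf', hrf'.symm, he'.1, by rw [← hc, hf₀f]⟩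
      exact (hΦu e heE1 e' this).symm
    · rintro - ⟨e, he, rfl⟩
      exact hmaps e he
  rw [himg, Set.ncard_image_of_injOn hinj]

/-- Counting blue edges into a vertex is invariant along red edges. -/
lemma ncard_blue_in_eq (hrc : ∀ v, G.IsVertex v → ∃ lam, G.IsIsolatedRedCycle lam ∧ G.r lam = v)
    (T : Set G.Path) (hT : ∀ g, G.IsRedEdge g → (G.s g ∈ T ↔ G.r g ∈ T))
    (g : G.Path) (hg : G.IsRedEdge g) :
    {e : G.Path | G.IsBlueEdge e ∧ G.r e ∈ T ∧ G.s e = G.r g}.ncard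
      = {e : G.Path | G.IsBlueEdge e ∧ G.r e ∈ T ∧ G.s e = G.s g}.ncard := by
  classical
  set E1 : Set G.Path := {e | G.IsBlueEdge e ∧ G.r e ∈ T ∧ G.s e = G.r g} with hE1
  set E2 : Set G.Path := {e | G.IsBlueEdge e ∧ G.r e ∈ T ∧ G.s e = G.s g} with hE2
  set Good : G.Path → G.Path → Prop := fun e e' =>
    ∃ f₀, G.IsRedEdge f₀ ∧ G.s f₀ = G.r e' ∧ G.d e' = (1, 0) ∧
      G.comp f₀ e' = G.comp e g with hGood
  have hdeg : ∀ e ∈ E1, G.d (G.comp e g) = ((0 : ℕ), (1 : ℕ)) + ((1 : ℕ), (0 : ℕ)) := by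
    intro e he
    rw [G.d_comp e g he.2.2, he.1, hg]; decide
  have hex : ∀ e : G.Path, ∃ e', e ∈ E1 → Good e e' := by
    intro e
    by_cases he : e ∈ E1
    · obtain ⟨⟨f₀, e'⟩, ⟨hdf₀, hde', hsf₀, hc⟩, -⟩ :=
        G.factor (G.comp e g) (0, 1) (1, 0) (hdeg e he)
      exact ⟨e', fun _ => ⟨f₀, hdf₀, hsf₀, hde', hc⟩⟩
    · exact ⟨e, fun h => absurd h he⟩
  set Φ : G.Path → G.Path := fun e => (hex e).choose with hΦdef
  have hΦ : ∀ e ∈ E1, Good e (Φ e) := fun e he => (hex e).choose_spec he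
  have hΦu : ∀ e ∈ E1, ∀ e'', Good e e'' → e'' = Φ e := by
    intro e he e'' ⟨f'', hf'', hsf'', hde'', hc''⟩
    obtain ⟨f', hf', hsf', hde', hc'⟩ := hΦ e he
    have := (G.factor (G.comp e g) (0, 1) (1, 0) (hdeg e he)).unique
      (y₁ := (f'', e'')) (y₂ := (f', Φ e))
      ⟨hf'', hde'', hsf'', hc''⟩ ⟨hf', hde', hsf', hc'⟩
    exact congrArg Prod.snd this
  have hmaps : ∀ e ∈ E1, Φ e ∈ E2 := by
    intro e he
    obtain ⟨f₀, hf₀, hsf₀, hde', hc'⟩ := hΦ e he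
    refine ⟨hde', ?_, ?_⟩
    · have h1 : G.r (G.comp f₀ (Φ e)) = G.r f₀ := G.r_comp _ _ hsf₀
      have h2 : G.r (G.comp e g) = G.r e := G.r_comp e g he.2.2
      rw [hc', h2] at h1
      rw [← hsf₀]
      exact (hT f₀ hf₀).mpr (h1 ▸ he.2.1)
    · have h1 : G.s (G.comp f₀ (Φ e)) = G.s (Φ e) := G.s_comp _ _ hsf₀
      have h2 : G.s (G.comp e g) = G.s g := G.s_comp e g he.2.2
      rw [hc', h2] at h1; exact h1.symm
  have hinj : Set.InjOn Φ E1 := by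
    intro e₁ he₁ e₂ he₂ heq
    obtain ⟨f₁, hf₁, hsf₁, hde₁, hc₁⟩ := hΦ e₁ he₁
    obtain ⟨f₂, hf₂, hsf₂, hde₂, hc₂⟩ := hΦ e₂ he₂
    obtain ⟨f₀, -, hu⟩ := exists_red_out hrc (G.r (Φ e₁)) (isVertex_r' _)
    have hff : f₁ = f₂ := by
      rw [hu f₁ hf₁ hsf₁, hu f₂ hf₂ (by rw [heq]; exact hsf₂)]
    have hcc : G.comp e₁ g = G.comp e₂ g := by
      rw [← hc₁, ← hc₂, hff, heq]
    have hdeg2 : G.d (G.comp e₁ g) = ((1 : ℕ), (0 : ℕ)) + ((0 : ℕ), (1 : ℕ)) := by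
      rw [G.d_comp e₁ g he₁.2.2, he₁.1, hg]
    have := (G.factor (G.comp e₁ g) (1, 0) (0, 1) hdeg2).unique
      (y₁ := (e₁, g)) (y₂ := (e₂, g))
      ⟨he₁.1, hg, he₁.2.2, rfl⟩ ⟨he₂.1, hg, he₂.2.2, hcc.symm⟩
    exact congrArg Prod.fst this
  have himg : E2 = Φ '' E1 := by
    apply Set.Subset.antisymm
    · intro e' he'
      obtain ⟨g', ⟨hg', hsg'⟩, -⟩ := exists_red_out hrc (G.r e') (isVertex_r' _)
      have hdeg2 : G.d (G.comp g' e') = ((1 : ℕ), (0 : ℕ)) + ((0 : ℕ), (1 : ℕ)) := by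
        rw [G.d_comp g' e' hsg', hg', he'.1]; decide
      obtain ⟨⟨e, g₀⟩, ⟨hde, hdg₀, hse, hc⟩, -⟩ :=
        G.factor (G.comp g' e') (1, 0) (0, 1) hdeg2
      have hsg₀ : G.s g₀ = G.s g := by
        have h1 : G.s (G.comp e g₀) = G.s g₀ := G.s_comp _ _ hse
        have h2 : G.s (G.comp g' e') = G.s e' := G.s_comp _ _ hsg'
        rw [hc, h2] at h1
        rw [← h1]; exact he'.2.2
      obtain ⟨gc, -, hu⟩ := exists_red_out hrc (G.s g) (isVertex_s' g)
      have hg₀g : g₀ = g := by rw [hu g₀ hdg₀ hsg₀, hu g hg rfl]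
      have hre : G.r e = G.r g' := by
        have h1 : G.r (G.comp e g₀) = G.r e := G.r_comp _ _ hse
        have h2 : G.r (G.comp g' e') = G.r g' := G.r_comp _ _ hsg'
        rw [hc, h2] at h1; exact h1.symm
      have heE1 : e ∈ E1 := by
        refine ⟨hde, ?_, ?_⟩
        · rw [hre]
          exact (hT g' hg').mp (hsg' ▸ he'.2.1)
        · rw [← hg₀g, hse]
      refine ⟨e, heE1, ?_⟩
      have : Good e e' := ⟨g', hg', hsg', he'.1, by rw [← hc, hg₀g]⟩
      exact (hΦu e heE1 e' this).symm
    · rintro - ⟨e, he, rfl⟩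
      exact hmaps e he
  rw [himg, Set.ncard_image_of_injOn hinj]

/-- A function on vertices invariant along red edges is constant on red cycles. -/
lemma const_along_red {lam v : G.Path} (hred : G.IsRed lam) (c : G.Path → ℕ)
    (hstep : ∀ g, G.IsRedEdge g → c (G.s g) = c (G.r g))
    (hv : G.OnPath lam v) : c v = c (G.r lam) := by
  obtain ⟨-, μ, ⟨ν, hsμ, hcμ⟩, hsv⟩ := hv
  rw [← hsv]; clear hsv
  have key : ∀ m : ℕ, ∀ μ ν : G.Path, G.s μ = G.r ν → G.comp μ ν = lam →
      (G.d μ).2 = m → c (G.s μ) = c (G.r lam) := by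
    intro m
    induction m with
    | zero =>
      intro μ ν hsμ hcμ hm
      have hdd : G.d μ + G.d ν = G.d lam := by rw [← hcμ, G.d_comp μ ν hsμ]
      have hμ1 : (G.d μ).1 = 0 := by
        have h1 := congrArg Prod.fst hdd
        have h2 := hred
        simp only [Prod.fst_add] at h1
        unfold IsRed at h2
        omega
      have hμ0 : G.d μ = 0 := Prod.ext hμ1 hm
      have hμeq : μ = G.s μ := (G.s_vertex μ hμ0).symm
      have hμr : μ = G.r ν := hμeq.trans hsμ
      have hlamν : lam = ν := by rw [← hcμ, hμr, G.id_comp]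
      rw [hlamν, ← hμr]
      exact congrArg c hμeq.symm
    | succ m ih =>
      intro μ ν hsμ hcμ hm
      have hdd : G.d μ + G.d ν = G.d lam := by rw [← hcμ, G.d_comp μ ν hsμ]
      have hμ1 : (G.d μ).1 = 0 := by
        have h1 := congrArg Prod.fst hdd
        have h2 := hred
        simp only [Prod.fst_add] at h1
        unfold IsRed at h2
        omega
      have hd : G.d μ = (0, m) + (0, 1) := by
        have : G.d μ = ((G.d μ).1, (G.d μ).2) := rfl
        rw [this, hμ1, hm, Prod.mk_add_mk]
      obtain ⟨⟨ρ, g⟩, ⟨hdρ, hdg, hsρ, hcρ⟩, -⟩ := G.factor μ _ _ hd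
      have hsg : G.s g = G.s μ := by
        have := G.s_comp ρ g hsρ
        rw [hcρ] at this; exact this.symm
      have hsgν : G.s g = G.r ν := by rw [hsg, hsμ]
      have hρinit : G.s ρ = G.r (G.comp g ν) := by rw [G.r_comp g ν hsgν, hsρ]
      have hρcomp : G.comp ρ (G.comp g ν) = lam := by
        rw [← G.comp_assoc ρ g ν hsρ hsgν, hcρ, hcμ]
      calc c (G.s μ) = c (G.s g) := by rw [hsg]
        _ = c (G.r g) := hstep g hdg
        _ = c (G.s ρ) := by rw [← hsρ]
        _ = c (G.r lam) := ih ρ (G.comp g ν) hρinit hρcomp (by rw [hdρ])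
  exact key (G.d μ).2 μ ν hsμ hcμ rfl

end TwoGraph

/-- Counting a finite set fibered over a finite base with constant fiber size. -/
lemma ncard_eq_mul_of_fibers {α β : Type*} (S : Set α) (hS : S.Finite) (E : Set β)
    (hE : E.Finite) (g : β → α) (hgS : ∀ e ∈ E, g e ∈ S) (k : ℕ)
    (hk : ∀ v ∈ S, {e | e ∈ E ∧ g e = v}.ncard = k) : E.ncard = k * S.ncard := by
  classical
  have hfib : ∀ v : α, ({e | e ∈ E ∧ g e = v}).Finite :=
    fun v => hE.subset (fun e he => he.1)
  have hUnion : hE.toFinset = hS.toFinset.biUnion (fun v => (hfib v).toFinset) := by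
    ext e
    simp only [Set.Finite.mem_toFinset, Finset.mem_biUnion, Set.mem_setOf_eq]
    constructor
    · intro he
      exact ⟨g e, by simpa using hgS e he, he, rfl⟩
    · rintro ⟨v, -, he, -⟩
      exact he
  have hdisj : ∀ x ∈ hS.toFinset, ∀ y ∈ hS.toFinset, x ≠ y →
      Disjoint ((hfib x).toFinset) ((hfib y).toFinset) := by
    intro x _ y _ hxy
    rw [Finset.disjoint_left]
    intro e hex hey
    simp only [Set.Finite.mem_toFinset, Set.mem_setOf_eq] at hex hey
    exact hxy (hex.2.symm.trans hey.2)
  rw [Set.ncard_eq_toFinset_card _ hE, hUnion, Finset.card_biUnion hdisj]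
  have hsum : ∀ v ∈ hS.toFinset, ((hfib v).toFinset).card = k := by
    intro v hvS
    rw [← Set.ncard_eq_toFinset_card _ (hfib v)]
    exact hk v (by simpa using hvS)
  rw [Finset.sum_congr rfl hsum, Finset.sum_const, smul_eq_mul,
    ← Set.ncard_eq_toFinset_card _ hS, mul_comm]

/-- The incidence data of a generalised Bratteli diagram: well-defined
matrices `A_n`, `B_n` with no zero rows or columns satisfying
`A_n(i,j)|V_{n,j}| = |V_{n,j}Λ^{e₁}V_{n+1,i}| = |V_{n+1,i}|B_n(i,j)`, i.e.
`A_n T_n = T_{n+1} B_n`. -/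
theorem stmt9 (G : TwoGraph) (N : ℕ∞) (V : ℕ → Set G.Path) (hGBD : IsGBD G N V)
    (c : ℕ → ℕ) (W : ∀ n : ℕ, Fin (c n) → Set G.Path)
    (hWcyc : ∀ n : ℕ, (n : ℕ∞) ≤ N → ∀ j,
      ∃ lam, G.IsIsolatedRedCycle lam ∧ W n j = {v | G.OnPath lam v})
    (hWcover : ∀ n : ℕ, (n : ℕ∞) ≤ N → V n = ⋃ j, W n j)
    (hWdisj : ∀ n : ℕ, (n : ℕ∞) ≤ N → ∀ i j, i ≠ j → Disjoint (W n i) (W n j)) :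
    ∃ (Amat Bmat : ∀ n : ℕ, Fin (c (n + 1)) → Fin (c n) → ℕ),
      ∀ n : ℕ, ((n + 1 : ℕ) : ℕ∞) ≤ N →
        (∀ i j, ∀ v ∈ W n j,
          {e : G.Path | G.IsBlueEdge e ∧ G.r e = v ∧ G.s e ∈ W (n + 1) i}.ncard
            = Amat n i j) ∧
        (∀ i j, ∀ w ∈ W (n + 1) i,
          {e : G.Path | G.IsBlueEdge e ∧ G.r e ∈ W n j ∧ G.s e = w}.ncard
            = Bmat n i j) ∧
        (∀ i j,
          Amat n i j * (W n j).ncard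
              = {e : G.Path | G.IsBlueEdge e ∧ G.r e ∈ W n j ∧ G.s e ∈ W (n + 1) i}.ncard ∧
          {e : G.Path | G.IsBlueEdge e ∧ G.r e ∈ W n j ∧ G.s e ∈ W (n + 1) i}.ncard
              = (W (n + 1) i).ncard * Bmat n i j) ∧
        (∀ i, ∃ j, Amat n i j ≠ 0) ∧ (∀ j, ∃ i, Amat n i j ≠ 0) ∧
        (∀ i, ∃ j, Bmat n i j ≠ 0) ∧ (∀ j, ∃ i, Bmat n i j ≠ 0) ∧
        (∀ i j, Amat n i j * (W n j).ncard = (W (n + 1) i).ncard * Bmat n i j) := by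
  
  classical
  have hrc := hGBD.red_cycle
  refine ⟨fun n i j => if h : (W n j).Nonempty
      then {e : G.Path | G.IsBlueEdge e ∧ G.r e = h.choose ∧ G.s e ∈ W (n+1) i}.ncard else 0,
    fun n i j => if h : (W (n+1) i).Nonempty
      then {e : G.Path | G.IsBlueEdge e ∧ G.r e ∈ W n j ∧ G.s e = h.choose}.ncard else 0,
    ?_⟩
  intro n hn1
  have hn : (n : ℕ∞) ≤ N := le_trans (Nat.cast_le.mpr (Nat.le_succ n)) hn1
  have hWjV : ∀ j, W n j ⊆ V n := by
    intro j; rw [hWcover n hn]; exact Set.subset_iUnion _ j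
  have hWiV : ∀ i, W (n+1) i ⊆ V (n+1) := by
    intro i; rw [hWcover (n+1) hn1]; exact Set.subset_iUnion _ i
  have hWjfin : ∀ j, (W n j).Finite := fun j => (hGBD.level_finite n).subset (hWjV j)
  have hWifin : ∀ i, (W (n+1) i).Finite := fun i => (hGBD.level_finite (n+1)).subset (hWiV i)
  have hWjne : ∀ j : Fin (c n), (W n j).Nonempty := by
    intro j; obtain ⟨lam, hlam, hW⟩ := hWcyc n hn j
    exact ⟨G.r lam, by rw [hW]; exact TwoGraph.onPath_r' lam⟩
  have hWine : ∀ i : Fin (c (n+1)), (W (n+1) i).Nonempty := by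
    intro i; obtain ⟨lam, hlam, hW⟩ := hWcyc (n+1) hn1 i
    exact ⟨G.r lam, by rw [hW]; exact TwoGraph.onPath_r' lam⟩
  have hTi : ∀ i, ∀ g, G.IsRedEdge g → (G.s g ∈ W (n+1) i ↔ G.r g ∈ W (n+1) i) := by
    intro i g hg; obtain ⟨lam, hlam, hW⟩ := hWcyc (n+1) hn1 i
    rw [hW]; exact TwoGraph.red_closed hrc hlam hg
  have hTj : ∀ j, ∀ g, G.IsRedEdge g → (G.s g ∈ W n j ↔ G.r g ∈ W n j) := by
    intro j g hg; obtain ⟨lam, hlam, hW⟩ := hWcyc n hn j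
    rw [hW]; exact TwoGraph.red_closed hrc hlam hg
  -- constancy of counts
  have hAconst : ∀ (i : Fin (c (n+1))) (j : Fin (c n)), ∀ v ∈ W n j, ∀ v' ∈ W n j,
      {e : G.Path | G.IsBlueEdge e ∧ G.r e = v ∧ G.s e ∈ W (n+1) i}.ncard
        = {e : G.Path | G.IsBlueEdge e ∧ G.r e = v' ∧ G.s e ∈ W (n+1) i}.ncard := by
    intro i j v hv v' hv'
    obtain ⟨lam, hlam, hW⟩ := hWcyc n hn j
    have hstep : ∀ g, G.IsRedEdge g →
        (fun u => {e : G.Path | G.IsBlueEdge e ∧ G.r e = u ∧ G.s e ∈ W (n+1) i}.ncard) (G.s g)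
          = (fun u => {e : G.Path | G.IsBlueEdge e ∧ G.r e = u ∧ G.s e ∈ W (n+1) i}.ncard) (G.r g) :=
      fun g hg => TwoGraph.ncard_blue_out_eq hrc _ (hTi i) g hg
    have h1 := TwoGraph.const_along_red hlam.1
      (fun u => {e : G.Path | G.IsBlueEdge e ∧ G.r e = u ∧ G.s e ∈ W (n+1) i}.ncard)
      hstep (hW ▸ hv)
    have h2 := TwoGraph.const_along_red hlam.1
      (fun u => {e : G.Path | G.IsBlueEdge e ∧ G.r e = u ∧ G.s e ∈ W (n+1) i}.ncard)
      hstep (hW ▸ hv')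
    exact h1.trans h2.symm
  have hBconst : ∀ (i : Fin (c (n+1))) (j : Fin (c n)), ∀ w ∈ W (n+1) i, ∀ w' ∈ W (n+1) i,
      {e : G.Path | G.IsBlueEdge e ∧ G.r e ∈ W n j ∧ G.s e = w}.ncard
        = {e : G.Path | G.IsBlueEdge e ∧ G.r e ∈ W n j ∧ G.s e = w'}.ncard := by
    intro i j w hw w' hw'
    obtain ⟨lam, hlam, hW⟩ := hWcyc (n+1) hn1 i
    have hstep : ∀ g, G.IsRedEdge g →
        (fun u => {e : G.Path | G.IsBlueEdge e ∧ G.r e ∈ W n j ∧ G.s e = u}.ncard) (G.s g)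
          = (fun u => {e : G.Path | G.IsBlueEdge e ∧ G.r e ∈ W n j ∧ G.s e = u}.ncard) (G.r g) :=
      fun g hg => (TwoGraph.ncard_blue_in_eq hrc _ (hTj j) g hg).symm
    have h1 := TwoGraph.const_along_red hlam.1
      (fun u => {e : G.Path | G.IsBlueEdge e ∧ G.r e ∈ W n j ∧ G.s e = u}.ncard)
      hstep (hW ▸ hw)
    have h2 := TwoGraph.const_along_red hlam.1
      (fun u => {e : G.Path | G.IsBlueEdge e ∧ G.r e ∈ W n j ∧ G.s e = u}.ncard)
      hstep (hW ▸ hw')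
    exact h1.trans h2.symm
  -- well-definedness
  have claimA : ∀ (i : Fin (c (n+1))) (j : Fin (c n)), ∀ v ∈ W n j,
      {e : G.Path | G.IsBlueEdge e ∧ G.r e = v ∧ G.s e ∈ W (n+1) i}.ncard
        = (if h : (W n j).Nonempty
            then {e : G.Path | G.IsBlueEdge e ∧ G.r e = h.choose ∧ G.s e ∈ W (n+1) i}.ncard
            else 0) := by
    intro i j v hv
    have hne : (W n j).Nonempty := ⟨v, hv⟩
    exact (hAconst i j v hv _ hne.choose_spec).trans
      (dif_pos (t := fun h : (W n j).Nonempty =>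
          {e : G.Path | G.IsBlueEdge e ∧ G.r e = h.choose ∧ G.s e ∈ W (n+1) i}.ncard)
        (e := fun _ => 0) hne).symm
  have claimB : ∀ (i : Fin (c (n+1))) (j : Fin (c n)), ∀ w ∈ W (n+1) i,
      {e : G.Path | G.IsBlueEdge e ∧ G.r e ∈ W n j ∧ G.s e = w}.ncard
        = (if h : (W (n+1) i).Nonempty
            then {e : G.Path | G.IsBlueEdge e ∧ G.r e ∈ W n j ∧ G.s e = h.choose}.ncard
            else 0) := by
    intro i j w hw
    have hne : (W (n+1) i).Nonempty := ⟨w, hw⟩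
    exact (hBconst i j w hw _ hne.choose_spec).trans
      (dif_pos (t := fun h : (W (n+1) i).Nonempty =>
          {e : G.Path | G.IsBlueEdge e ∧ G.r e ∈ W n j ∧ G.s e = h.choose}.ncard)
        (e := fun _ => 0) hne).symm
  -- finiteness of the full edge sets
  have hEfin : ∀ (i : Fin (c (n+1))) (j : Fin (c n)),
      {e : G.Path | G.IsBlueEdge e ∧ G.r e ∈ W n j ∧ G.s e ∈ W (n+1) i}.Finite := by
    intro i j
    apply Set.Finite.subset (Set.Finite.biUnion (hWjfin j)
      (fun v _hv => hGBD.rowFinite v (1, 0) (hGBD.level_vertex n (hWjV j _hv))))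
    intro e he
    exact Set.mem_biUnion he.2.1 ⟨rfl, he.1⟩
  -- the two counting identities
  have hmulA : ∀ (i : Fin (c (n+1))) (j : Fin (c n)),
      {e : G.Path | G.IsBlueEdge e ∧ G.r e ∈ W n j ∧ G.s e ∈ W (n+1) i}.ncard
        = (if h : (W n j).Nonempty
            then {e : G.Path | G.IsBlueEdge e ∧ G.r e = h.choose ∧ G.s e ∈ W (n+1) i}.ncard
            else 0) * (W n j).ncard := by
    intro i j
    apply ncard_eq_mul_of_fibers (W n j) (hWjfin j) _ (hEfin i j) G.r (fun e he => he.2.1)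
    intro v hv
    rw [← claimA i j v hv]
    congr 1
    ext e
    simp only [Set.mem_setOf_eq]
    constructor
    · rintro ⟨⟨hb, -, hs⟩, hrv⟩; exact ⟨hb, hrv, hs⟩
    · rintro ⟨hb, hrv, hs⟩; exact ⟨⟨hb, by rw [hrv]; exact hv, hs⟩, hrv⟩
  have hmulB : ∀ (i : Fin (c (n+1))) (j : Fin (c n)),
      {e : G.Path | G.IsBlueEdge e ∧ G.r e ∈ W n j ∧ G.s e ∈ W (n+1) i}.ncard
        = (W (n+1) i).ncard * (if h : (W (n+1) i).Nonempty
            then {e : G.Path | G.IsBlueEdge e ∧ G.r e ∈ W n j ∧ G.s e = h.choose}.ncard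
            else 0) := by
    intro i j
    rw [mul_comm]
    apply ncard_eq_mul_of_fibers (W (n+1) i) (hWifin i) _ (hEfin i j) G.s (fun e he => he.2.2)
    intro w hw
    rw [← claimB i j w hw]
    congr 1
    ext e
    simp only [Set.mem_setOf_eq]
    constructor
    · rintro ⟨⟨hb, hr, -⟩, hsw⟩; exact ⟨hb, hr, hsw⟩
    · rintro ⟨hb, hr, hsw⟩; exact ⟨⟨hb, hr, by rw [hsw]; exact hw⟩, hsw⟩
  have heqAB : ∀ (i : Fin (c (n+1))) (j : Fin (c n)),
      (if h : (W n j).Nonempty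
          then {e : G.Path | G.IsBlueEdge e ∧ G.r e = h.choose ∧ G.s e ∈ W (n+1) i}.ncard
          else 0) * (W n j).ncard
        = (W (n+1) i).ncard * (if h : (W (n+1) i).Nonempty
            then {e : G.Path | G.IsBlueEdge e ∧ G.r e ∈ W n j ∧ G.s e = h.choose}.ncard
            else 0) :=
    fun i j => (hmulA i j).symm.trans (hmulB i j)
  have hWjcard : ∀ j, (W n j).ncard ≠ 0 :=
    fun j => ((Set.ncard_pos (hWjfin j)).mpr (hWjne j)).ne'
  have hWicard : ∀ i, (W (n+1) i).ncard ≠ 0 :=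
    fun i => ((Set.ncard_pos (hWifin i)).mpr (hWine i)).ne'
  -- nonzero columns of A
  have hApos : ∀ j : Fin (c n), ∃ i : Fin (c (n+1)),
      (if h : (W n j).Nonempty
          then {e : G.Path | G.IsBlueEdge e ∧ G.r e = h.choose ∧ G.s e ∈ W (n+1) i}.ncard
          else 0) ≠ 0 := by
    intro j
    obtain ⟨v, hv⟩ := hWjne j
    have hvV : v ∈ V n := hWjV j hv
    have hvvert : G.IsVertex v := hGBD.level_vertex n hvV
    have hnsrc : ¬ G.IsBlueSource v := by
      intro hsrc
      obtain ⟨m, hmN, hvm⟩ := hGBD.sources_top v hsrc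
      rcases eq_or_ne m n with rfl | hne
      · rw [← hmN] at hn1
        exact absurd (Nat.cast_le.mp hn1) (by omega)
      · exact Set.disjoint_left.mp (hGBD.level_disjoint m n hne) hvm hvV
    have hex : ∃ e, G.IsBlueEdge e ∧ G.r e = v := by
      by_contra h
      push_neg at h
      exact hnsrc ⟨hvvert, fun e he => h e he⟩
    obtain ⟨e, hbe, hre⟩ := hex
    obtain ⟨m, hrm, hsm⟩ := hGBD.blue_level e hbe
    rw [hre] at hrm
    have hmn : m = n := by
      by_contra hne
      exact Set.disjoint_left.mp (hGBD.level_disjoint m n hne) hrm hvV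
    subst hmn
    rw [hWcover (m+1) hn1, Set.mem_iUnion] at hsm
    obtain ⟨i, hsi⟩ := hsm
    refine ⟨i, ?_⟩
    beta_reduce
    rw [← claimA i j v hv]
    have hfibfin : {e : G.Path | G.IsBlueEdge e ∧ G.r e = v ∧ G.s e ∈ W (m+1) i}.Finite := by
      apply (hGBD.rowFinite v (1, 0) hvvert).subset
      intro e' he'
      exact ⟨he'.2.1, he'.1⟩
    exact ((Set.ncard_pos hfibfin).mpr ⟨e, hbe, hre, hsi⟩).ne'
  -- nonzero rows of B
  have hBpos : ∀ i : Fin (c (n+1)), ∃ j : Fin (c n),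
      (if h : (W (n+1) i).Nonempty
          then {e : G.Path | G.IsBlueEdge e ∧ G.r e ∈ W n j ∧ G.s e = h.choose}.ncard
          else 0) ≠ 0 := by
    intro i
    obtain ⟨w, hw⟩ := hWine i
    have hwV : w ∈ V (n+1) := hWiV i hw
    have hnsnk : ¬ G.IsBlueSink w := by
      intro hsnk
      have h0 := hGBD.sinks_bottom w hsnk
      exact Set.disjoint_left.mp (hGBD.level_disjoint (n+1) 0 (by omega)) hwV h0
    have hex : ∃ e, G.IsBlueEdge e ∧ G.s e = w := by
      by_contra h
      push_neg at h
      exact hnsnk ⟨hGBD.level_vertex _ hwV, fun e he => h e he⟩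
    obtain ⟨e, hbe, hse⟩ := hex
    obtain ⟨m, hrm, hsm⟩ := hGBD.blue_level e hbe
    rw [hse] at hsm
    have hmn : m = n := by
      by_contra hne
      have hne' : m + 1 ≠ n + 1 := by omega
      exact Set.disjoint_left.mp (hGBD.level_disjoint (m+1) (n+1) hne') hsm hwV
    subst hmn
    rw [hWcover m hn, Set.mem_iUnion] at hrm
    obtain ⟨j, hrj⟩ := hrm
    refine ⟨j, ?_⟩
    beta_reduce
    rw [← claimB i j w hw]
    have hfibfin : {e : G.Path | G.IsBlueEdge e ∧ G.r e ∈ W m j ∧ G.s e = w}.Finite := by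
      apply (hEfin i j).subset
      intro e' he'
      exact ⟨he'.1, he'.2.1, by rw [he'.2.2]; exact hw⟩
    exact ((Set.ncard_pos hfibfin).mpr ⟨e, hbe, hrj, hse⟩).ne'
  refine ⟨claimA, claimB, fun i j => ⟨(hmulA i j).symm, hmulB i j⟩, ?_, hApos, hBpos, ?_, heqAB⟩
  · -- nonzero rows of A
    intro i
    obtain ⟨j, hB⟩ := hBpos i
    refine ⟨j, ?_⟩
    beta_reduce
    intro hA0
    have h := heqAB i j
    rw [hA0, zero_mul] at h
    exact Nat.mul_ne_zero (hWicard i) hB h.symm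
  · -- nonzero columns of B
    intro j
    obtain ⟨i, hA⟩ := hApos j
    refine ⟨i, ?_⟩
    beta_reduce
    intro hB0
    have h := heqAB i j
    rw [hB0, mul_zero] at h
    exact Nat.mul_ne_zero hA (hWjcard j) h
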